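/- Over F = F_3 = Z/3Z, let C ⊆ F^12 be the row space of the 10 × 12 matrix whose rows are: for 1 ≤ j ≤ 4, the vector with a 1 in position j, the entry of (2, 1, 2, 1) indexed by j in position 5, and zeros elsewhere; and for 5 ≤ j ≤ 10, the vector with a 1 in position j + 1 and a 2 in position 12 and zeros elsewhere. Then: (i) C is invariant under the multi-twisted shift T_Λ with Λ = (2, 1) and block lengths (5, 7); (ii) dim_F C = 10; (iii) C ∩ C^⊥ = {0}, i.e., C is LCD. In particular there is an LCD Λ-MT code over F_3 for which λ_1 = λ_1^{−1} and λ_2 = λ_2^{−1}. -/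
import Mathlib


/-!
STATEMENT 15: Over F₃, the row space C ⊆ F₃¹² of the described 10×12 matrix is a
(2,1)-MT code with block lengths (5,7), dim C = 10, and C is LCD, even though
λ₁ = λ₁⁻¹ and λ₂ = λ₂⁻¹.
-/

/-- The Euclidean dual of a linear code in `(ZMod 3)^12`. -/
noncomputable def dualCode (C : Submodule (ZMod 3) (Fin 12 → ZMod 3)) :
    Submodule (ZMod 3) (Fin 12 → ZMod 3) :=
  ⨅ b ∈ C, LinearMap.ker
    (∑ k : Fin 12, b k • (LinearMap.proj k : (Fin 12 → ZMod 3) →ₗ[ZMod 3] ZMod 3))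

/-- The 10×12 generator matrix (rows and columns indexed from 0): row `j` for `j < 4`
has a `1` in position `j` and the `j`-th entry of `(2,1,2,1)` in position `4`;
row `j` for `4 ≤ j ≤ 9` has a `1` in position `j+1` and a `2` in position `11`. -/
def Gmat : Fin 10 → Fin 12 → ZMod 3 := fun j k =>
  if h : (j : ℕ) < 4 then
    (if (k : ℕ) = (j : ℕ) then 1
     else if (k : ℕ) = 4 then ![2, 1, 2, 1] ⟨(j : ℕ), h⟩ else 0)
  else
    (if (k : ℕ) = (j : ℕ) + 1 then 1
     else if (k : ℕ) = 11 then 2 else 0)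

/-- The code `C`: the row space of `G`. -/
def Ccode : Submodule (ZMod 3) (Fin 12 → ZMod 3) := Submodule.span (ZMod 3) (Set.range Gmat)

/-- The multi-twisted shift `T_Λ` with `Λ = (2,1)` and block lengths `(5,7)`. -/
def Tshift : (Fin 12 → ZMod 3) → (Fin 12 → ZMod 3) := fun v =>
  ![2 * v 4, v 0, v 1, v 2, v 3,
    1 * v 11, v 5, v 6, v 7, v 8, v 9, v 10]

def Lmap : (Fin 12 → ZMod 3) →ₗ[ZMod 3] (ZMod 3) × (ZMod 3) where
  toFun v := (v 4 - (2 * v 0 + v 1 + 2 * v 2 + v 3),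
              v 11 - 2 * (v 5 + v 6 + v 7 + v 8 + v 9 + v 10))
  map_add' u v := by simp [Pi.add_apply]; constructor <;> ring
  map_smul' c v := by simp [Pi.smul_apply, smul_eq_mul]; constructor <;> ring

lemma mem_ker_Lmap (v : Fin 12 → ZMod 3) :
    v ∈ LinearMap.ker Lmap ↔
      v 4 = 2 * v 0 + v 1 + 2 * v 2 + v 3 ∧
      v 11 = 2 * (v 5 + v 6 + v 7 + v 8 + v 9 + v 10) := by
  simp [Lmap, LinearMap.mem_ker, Prod.ext_iff, sub_eq_zero]

lemma Ceq : Ccode = LinearMap.ker Lmap := by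
  apply le_antisymm
  · rw [Ccode, Submodule.span_le]
    rintro _ ⟨j, rfl⟩
    rw [SetLike.mem_coe, mem_ker_Lmap]
    fin_cases j <;> constructor <;> simp [Gmat] <;> decide
  · intro v hv
    rw [mem_ker_Lmap] at hv
    have hrep : v = v 0 • Gmat ⟨0, by norm_num⟩ + v 1 • Gmat ⟨1, by norm_num⟩ +
        v 2 • Gmat ⟨2, by norm_num⟩ + v 3 • Gmat ⟨3, by norm_num⟩ +
        v 5 • Gmat ⟨4, by norm_num⟩ + v 6 • Gmat ⟨5, by norm_num⟩ +
        v 7 • Gmat ⟨6, by norm_num⟩ + v 8 • Gmat ⟨7, by norm_num⟩ +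
        v 9 • Gmat ⟨8, by norm_num⟩ + v 10 • Gmat ⟨9, by norm_num⟩ := by
      funext k
      fin_cases k <;>
        simp [Gmat, Pi.add_apply, Pi.smul_apply, smul_eq_mul, show ((0:Fin 12):ℕ) = 0 from rfl, show ((1:Fin 12):ℕ) = 1 from rfl, show ((2:Fin 12):ℕ) = 2 from rfl, show ((3:Fin 12):ℕ) = 3 from rfl, show ((4:Fin 12):ℕ) = 4 from rfl, show ((5:Fin 12):ℕ) = 5 from rfl, show ((6:Fin 12):ℕ) = 6 from rfl, show ((7:Fin 12):ℕ) = 7 from rfl, show ((8:Fin 12):ℕ) = 8 from rfl, show ((9:Fin 12):ℕ) = 9 from rfl, show ((10:Fin 12):ℕ) = 10 from rfl, show ((11:Fin 12):ℕ) = 11 from rfl, show ((0:Fin 10):ℕ) = 0 from rfl, show ((1:Fin 10):ℕ) = 1 from rfl, show ((2:Fin 10):ℕ) = 2 from rfl, show ((3:Fin 10):ℕ) = 3 from rfl, show ((4:Fin 10):ℕ) = 4 from rfl, show ((5:Fin 10):ℕ) = 5 from rfl, show ((6:Fin 10):ℕ) = 6 from rfl, show ((7:Fin 10):ℕ) = 7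 from rfl, show ((8:Fin 10):ℕ) = 8 from rfl, show ((9:Fin 10):ℕ) = 9 from rfl] <;>
        first | rfl | linear_combination (norm := (ring_nf; (try reduce_mod_char); done)) (0)*hv.1 + (0)*hv.2 | linear_combination (norm := (ring_nf; (try reduce_mod_char); done)) (0)*hv.1 + (1)*hv.2 | linear_combination (norm := (ring_nf; (try reduce_mod_char); done)) (0)*hv.1 + (2)*hv.2 | linear_combination (norm := (ring_nf; (try reduce_mod_char); done)) (1)*hv.1 + (0)*hv.2 | linear_combination (norm := (ring_nf; (try reduce_mod_char); done)) (1)*hv.1 + (1)*hv.2 | linear_combination (norm := (ring_nf; (try reduce_mod_char); done)) (1)*hv.1 + (2)*hv.2 | linear_combination (norm := (ring_nf; (try reduce_mod_char); done)) (2)*hv.1 + (0)*hv.2 | linear_combination (norm := (ring_nf; (try reduce_mod_char); done)) (2)*hv.1 + (1)*hv.2 | linear_combination (norm := (ring_nf; (try reduce_mod_char); done)) (2)*hv.1 + (2)*hv.2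
    rw [hrep]
    have hg : ∀ j : Fin 10, Gmat j ∈ Ccode := fun j => Submodule.subset_span ⟨j, rfl⟩
    exact add_mem (add_mem (add_mem (add_mem (add_mem (add_mem (add_mem (add_mem (add_mem
      (Submodule.smul_mem _ _ (hg _)) (Submodule.smul_mem _ _ (hg _)))
      (Submodule.smul_mem _ _ (hg _))) (Submodule.smul_mem _ _ (hg _)))
      (Submodule.smul_mem _ _ (hg _))) (Submodule.smul_mem _ _ (hg _)))
      (Submodule.smul_mem _ _ (hg _))) (Submodule.smul_mem _ _ (hg _)))
      (Submodule.smul_mem _ _ (hg _))) (Submodule.smul_mem _ _ (hg _))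

theorem stmt15 :
    (∀ u ∈ Ccode, Tshift u ∈ Ccode) ∧
    Module.finrank (ZMod 3) Ccode = 10 ∧
    Ccode ⊓ dualCode Ccode = ⊥ := by
  refine ⟨?_, ?_, ?_⟩
  · intro u hu
    rw [Ceq, mem_ker_Lmap] at hu ⊢
    have e0 : Tshift u 0 = 2 * u 4 := rfl
    have e1 : Tshift u 1 = u 0 := rfl
    have e2 : Tshift u 2 = u 1 := rfl
    have e3 : Tshift u 3 = u 2 := rfl
    have e4 : Tshift u 4 = u 3 := rfl
    have e5 : Tshift u 5 = 1 * u 11 := rfl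
    have e6 : Tshift u 6 = u 5 := rfl
    have e7 : Tshift u 7 = u 6 := rfl
    have e8 : Tshift u 8 = u 7 := rfl
    have e9 : Tshift u 9 = u 8 := rfl
    have e10 : Tshift u 10 = u 9 := rfl
    have e11 : Tshift u 11 = u 10 := rfl
    rw [e0, e1, e2, e3, e4, e5, e6, e7, e8, e9, e10, e11]
    constructor
    · linear_combination (norm := (ring_nf; (try reduce_mod_char); done)) 2*hu.1
    · linear_combination (norm := (ring_nf; (try reduce_mod_char); done)) hu.2
  · rw [Ceq]
    have hsurj : Function.Surjective Lmap := by
      intro p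
      refine ⟨fun k => if k = 4 then p.1 else if k = 11 then p.2 else 0, ?_⟩
      simp [Lmap]
    have h1 := LinearMap.finrank_range_add_finrank_ker Lmap
    rw [LinearMap.range_eq_top.mpr hsurj, finrank_top] at h1
    have h2 : Module.finrank (ZMod 3) (Fin 12 → ZMod 3) = 12 := by
      simp [Module.finrank_fintype_fun_eq_card]
    have h3 : Module.finrank (ZMod 3) (ZMod 3 × ZMod 3) = 2 := by
      simp [Module.finrank_prod]
    omega
  · rw [eq_bot_iff]
    intro v hv
    rw [Submodule.mem_inf] at hv
    obtain ⟨hC, hD⟩ := hv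
    have hdual : ∀ b, b ∈ Ccode → ∑ k : Fin 12, b k * v k = 0 := by
      intro b hb
      rw [dualCode] at hD
      have h1 := (Submodule.mem_iInf _).mp hD b
      have h2 := (Submodule.mem_iInf _).mp h1 hb
      rw [LinearMap.mem_ker] at h2
      simpa [LinearMap.sum_apply, LinearMap.smul_apply, LinearMap.proj_apply,
        smul_eq_mul] using h2
    rw [Ceq, mem_ker_Lmap] at hC
    have hg : ∀ j : Fin 10, Gmat j ∈ Ccode := fun j => Submodule.subset_span ⟨j, rfl⟩
    have key : ∀ j : Fin 10, ∑ k : Fin 12, Gmat j k * v k = 0 := fun j => hdual _ (hg j)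
    have d0 := key ⟨0, by norm_num⟩
    have d1 := key ⟨1, by norm_num⟩
    have d2 := key ⟨2, by norm_num⟩
    have d3 := key ⟨3, by norm_num⟩
    have d4 := key ⟨4, by norm_num⟩
    have d5 := key ⟨5, by norm_num⟩
    have d6 := key ⟨6, by norm_num⟩
    have d7 := key ⟨7, by norm_num⟩
    have d8 := key ⟨8, by norm_num⟩
    have d9 := key ⟨9, by norm_num⟩
    simp [Fin.sum_univ_succ, Gmat, show ((Fin.succ 2) : Fin 12) = 3 from by decide, show ((Fin.succ 2).succ : Fin 12) = 4 from by decide, show ((Fin.succ 2).succ.succ : Fin 12) = 5 from by decide, show ((Fin.succ 2).succ.succ.succ : Fin 12) = 6 from by decide, show ((Fin.succ 2).succ.succ.succ.succ : Fin 12) = 7 from by decide, show ((Fin.succ 2).succ.succ.succ.succ.succ : Fin 12) = 8 from by decide, show ((Fin.succ 2).succ.succ.succ.succ.succ.succ : Fin 12) = 9 from by decide, show ((Fin.succ 2).succ.succ.succ.succ.succ.succ.succ : Fin 12) = 10 from by decide, show ((Fin.succ 2).succ.succ.succ.succ.succ.succ.succ.succ : Fin 12) = 11 from by decide, show ((0:Fin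 12):ℕ) = 0 from rfl, show ((1:Fin 12):ℕ) = 1 from rfl, show ((2:Fin 12):ℕ) = 2 from rfl, show ((3:Fin 12):ℕ) = 3 from rfl, show ((4:Fin 12):ℕ) = 4 from rfl, show ((5:Fin 12):ℕ) = 5 from rfl, show ((6:Fin 12):ℕ) = 6 from rfl, show ((7:Fin 12):ℕ) = 7 from rfl, show ((8:Fin 12):ℕ) = 8 from rfl, show ((9:Fin 12):ℕ) = 9 from rfl, show ((10:Fin 12):ℕ) = 10 from rfl, show ((11:Fin 12):ℕ) = 11 from rfl] at d0 d1 d2 d3 d4 d5 d6 d7 d8 d9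
    have h4 : v 4 = 0 := by
      linear_combination (norm := (ring_nf; (try reduce_mod_char); done)) 2*hC.1 + d0 + 2*d1 + d2 + 2*d3
    have h11 : v 11 = 0 := by
      linear_combination (norm := (ring_nf; (try reduce_mod_char); done)) hC.2 + 2*d4 + 2*d5 + 2*d6 + 2*d7 + 2*d8 + 2*d9
    have hv0 : v 0 = 0 := by
      linear_combination (norm := (ring_nf; (try reduce_mod_char); done)) d0 + h4
    have hv1 : v 1 = 0 := by
      linear_combination (norm := (ring_nf; (try reduce_mod_char); done)) d1 + 2*h4
    have hv2 : v 2 = 0 := by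
      linear_combination (norm := (ring_nf; (try reduce_mod_char); done)) d2 + h4
    have hv3 : v 3 = 0 := by
      linear_combination (norm := (ring_nf; (try reduce_mod_char); done)) d3 + 2*h4
    have hv5 : v 5 = 0 := by
      linear_combination (norm := (ring_nf; (try reduce_mod_char); done)) d4 + h11
    have hv6 : v 6 = 0 := by
      linear_combination (norm := (ring_nf; (try reduce_mod_char); done)) d5 + h11
    have hv7 : v 7 = 0 := by
      linear_combination (norm := (ring_nf; (try reduce_mod_char); done)) d6 + h11
    have hv8 : v 8 = 0 := by
      linear_combination (norm := (ring_nf; (try reduce_mod_char); done)) d7 + h11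
    have hv9 : v 9 = 0 := by
      linear_combination (norm := (ring_nf; (try reduce_mod_char); done)) d8 + h11
    have hv10 : v 10 = 0 := by
      linear_combination (norm := (ring_nf; (try reduce_mod_char); done)) d9 + h11
    have hz : v = 0 := by
      funext k
      fin_cases k <;> assumption
    rw [hz]
    exact Submodule.zero_mem ⊥
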